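/- For the test function F̄: ℕ → ℝ defined by F̄(α) = z^{-1/4} e^{-z^{3/4}(α-1)} for α ≥ 1 and F̄(0) = F̄(1), there exist constants c, C > 0 independent of z ∈ (0,1) such that: (i) c z^{1/4} ≤ Σ_{α ≥ 1} (F̄(α+1) - F̄(α))² ≤ C z^{1/4}; (ii) F̄(1) = z^{-1/4}; (iii) c z^{-1/4} ≤ z Σ_{α ∈ ℕ} F̄(α)² ≤ C z^{-1/4}. -/

import Mathlib

open Real

/-- The test function `F̄(α) = z^{-1/4} e^{-z^{3/4}(α-1)}` for `α ≥ 1`, `F̄(0) = F̄(1)`. -/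
noncomputable def Fbar (z : ℝ) (α : ℕ) : ℝ :=
  if α = 0 then z ^ (-(1/4 : ℝ))
  else z ^ (-(1/4 : ℝ)) * Real.exp (-(z ^ ((3:ℝ)/4)) * ((α : ℝ) - 1))

/-!
Away from `α = 0` the test function is geometric, `F̄(α + 1) = A rᵅ` with `A = z^{-1/4}`,
`r = e^{-w}` and `w = z^{3/4}`, so both series sum in closed form:
`Σ (F̄(α+2) - F̄(α+1))² = A² (1 - r)/(1 + r)` and `Σ F̄² = A² + A²/(1 - r²)`.
For `0 < w ≤ 1` we have `w/2 ≤ 1 - e^{-w} ≤ w`, so `(1 - r)/(1 + r)` and `1 - r²` are both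
comparable to `w`, and the powers of `z` combine to `A² w = z^{1/4}` and `z A² / w = z^{-1/4}`.
-/

lemma Real.half_le_one_sub_exp_neg {w : ℝ} (h0 : 0 ≤ w) (h1 : w ≤ 1) :
    w / 2 ≤ 1 - exp (-w) := by
  have h_exp : exp (-w) ≤ (1 + w)⁻¹ := by
    rw [exp_neg]
    exact inv_anti₀ (by linarith) (by linarith [add_one_le_exp w])
  have h_inv : (1 + w)⁻¹ ≤ 1 - w / 2 := by
    rw [inv_le_iff_one_le_mul₀ (by linarith)]
    nlinarith
  linarith

lemma Real.abs_exp_neg_lt_one {w : ℝ} (hw : 0 < w) : |exp (-w)| < 1 := by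
  rwa [abs_of_pos (exp_pos _), exp_lt_one_iff, neg_lt_zero]

section Geometric

variable {r : ℝ}

lemma hasSum_sq_mul_geometric (hr : |r| < 1) (A : ℝ) :
    HasSum (fun n : ℕ => (A * r ^ n) ^ 2) (A ^ 2 / (1 - r ^ 2)) := by
  have hr2 : r ^ 2 < 1 := (sq_lt_one_iff_abs_lt_one r).mpr hr
  rw [div_eq_mul_inv]
  exact ((hasSum_geometric_of_lt_one (sq_nonneg r) hr2).mul_left (A ^ 2)).congr_fun
    fun n => by ring

lemma hasSum_sq_sub_mul_geometric (hr : |r| < 1) (A : ℝ) :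
    HasSum (fun n : ℕ => (A * r ^ (n + 1) - A * r ^ n) ^ 2) (A ^ 2 * (1 - r) / (1 + r)) := by
  obtain ⟨hr₁, hr₂⟩ := abs_lt.mp hr
  have h_eq : (A * (r - 1)) ^ 2 / (1 - r ^ 2) = A ^ 2 * (1 - r) / (1 + r) := by
    field_simp [show 1 - r ^ 2 ≠ 0 by nlinarith, show 1 + r ≠ 0 by linarith]
    ring
  exact h_eq ▸ (hasSum_sq_mul_geometric hr (A * (r - 1))).congr_fun fun n => by ring

end Geometric

lemma Fbar_succ (z : ℝ) (n : ℕ) :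
    Fbar z (n + 1) = z ^ (-(1/4 : ℝ)) * exp (-z ^ ((3:ℝ)/4)) ^ n := by
  rw [Fbar, if_neg n.succ_ne_zero, ← exp_nat_mul]
  push_cast
  ring_nf

section Estimates

variable {z : ℝ}

lemma tsum_sq_Fbar_sub (hz : 0 < z) :
    ∑' α : ℕ, (Fbar z (α + 2) - Fbar z (α + 1)) ^ 2 =
      (z ^ (-(1/4 : ℝ))) ^ 2 * (1 - exp (-z ^ ((3:ℝ)/4))) / (1 + exp (-z ^ ((3:ℝ)/4))) := by
  simp only [Fbar_succ]
  exact (hasSum_sq_sub_mul_geometric (abs_exp_neg_lt_one (rpow_pos_of_pos hz _)) _).tsum_eq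

lemma hasSum_sq_Fbar (hz : 0 < z) :
    HasSum (fun α : ℕ => Fbar z α ^ 2)
      ((z ^ (-(1/4 : ℝ))) ^ 2 + (z ^ (-(1/4 : ℝ))) ^ 2 / (1 - exp (-z ^ ((3:ℝ)/4)) ^ 2)) := by
  have h_succ : HasSum (fun n : ℕ => Fbar z (n + 1) ^ 2)
      ((z ^ (-(1/4 : ℝ))) ^ 2 / (1 - exp (-z ^ ((3:ℝ)/4)) ^ 2)) := by
    simp only [Fbar_succ]
    exact hasSum_sq_mul_geometric (abs_exp_neg_lt_one (rpow_pos_of_pos hz _)) _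
  have h_zero : Fbar z 0 = z ^ (-(1/4 : ℝ)) := if_pos rfl
  simpa only [h_zero] using HasSum.zero_add (f := fun n => Fbar z n ^ 2) h_succ

lemma tsum_sq_Fbar_sub_bounds (hz0 : 0 < z) (hz1 : z ≤ 1) :
    z ^ ((1:ℝ)/4) / 4 ≤ ∑' α : ℕ, (Fbar z (α + 2) - Fbar z (α + 1)) ^ 2 ∧
      ∑' α : ℕ, (Fbar z (α + 2) - Fbar z (α + 1)) ^ 2 ≤ z ^ ((1:ℝ)/4) := by
  have h_pow : (z ^ (-(1/4 : ℝ))) ^ 2 * z ^ ((3:ℝ)/4) = z ^ ((1:ℝ)/4) := by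
    rw [← rpow_natCast, ← rpow_mul hz0.le, ← rpow_add hz0]
    norm_num
  rw [tsum_sq_Fbar_sub hz0, ← h_pow, mul_div_assoc, mul_div_assoc]
  set w := z ^ ((3:ℝ)/4)
  have hw0 : 0 < w := rpow_pos_of_pos hz0 _
  have h_lower := half_le_one_sub_exp_neg hw0.le (rpow_le_one hz0.le hz1 (by norm_num))
  have h_upper := one_sub_le_exp_neg w
  have hr := exp_pos (-w)
  have hA : 0 ≤ (z ^ (-(1/4 : ℝ))) ^ 2 := sq_nonneg _
  constructor
  · refine mul_le_mul_of_nonneg_left ?_ hA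
    rw [le_div_iff₀ (by positivity)]
    nlinarith
  · refine mul_le_mul_of_nonneg_left ?_ hA
    rw [div_le_iff₀ (by positivity)]
    nlinarith

lemma tsum_sq_Fbar_bounds (hz0 : 0 < z) (hz1 : z ≤ 1) :
    z ^ (-(1/4 : ℝ)) / 2 ≤ z * ∑' α : ℕ, Fbar z α ^ 2 ∧
      z * ∑' α : ℕ, Fbar z α ^ 2 ≤ 3 * z ^ (-(1/4 : ℝ)) := by
  have h_pow : z * (z ^ (-(1/4 : ℝ))) ^ 2 = z ^ ((1:ℝ)/2) := by
    rw [← rpow_natCast, ← rpow_mul hz0.le]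
    nth_rw 1 [← rpow_one z]
    rw [← rpow_add hz0]
    norm_num
  have h_pow_div : z ^ ((1:ℝ)/2) / z ^ ((3:ℝ)/4) = z ^ (-(1/4 : ℝ)) := by
    rw [← rpow_sub hz0]
    norm_num
  have h_pow_le : z ^ ((1:ℝ)/2) ≤ z ^ (-(1/4 : ℝ)) :=
    rpow_le_rpow_of_exponent_ge hz0 hz1 (by norm_num)
  rw [(hasSum_sq_Fbar hz0).tsum_eq, mul_add, ← mul_div_assoc, h_pow, ← h_pow_div]
  set w := z ^ ((3:ℝ)/4)
  set q := z ^ ((1:ℝ)/2)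
  have hw0 : 0 < w := rpow_pos_of_pos hz0 _
  have hw1 : w ≤ 1 := rpow_le_one hz0.le hz1 (by norm_num)
  have hq : 0 < q := rpow_pos_of_pos hz0 _
  have h_exp_lower := half_le_one_sub_exp_neg hw0.le hw1
  have h_one_sub_sq_le : 1 - exp (-w) ^ 2 ≤ 2 * w := by nlinarith [one_sub_le_exp_neg w]
  have h_le_one_sub_sq : w / 2 ≤ 1 - exp (-w) ^ 2 := by nlinarith [exp_pos (-w)]
  constructor
  · calc q / w / 2 = q / (2 * w) := by ring
      _ ≤ q / (1 - exp (-w) ^ 2) :=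
        div_le_div_of_nonneg_left hq.le (by linarith) h_one_sub_sq_le
      _ ≤ q + q / (1 - exp (-w) ^ 2) := by linarith
  · have h1 : q ≤ q / w := le_div_self hq.le hw0 hw1
    have h2 : q / (1 - exp (-w) ^ 2) ≤ q / (w / 2) :=
      div_le_div_of_nonneg_left hq.le (by linarith) h_le_one_sub_sq
    calc q + q / (1 - exp (-w) ^ 2) ≤ q / w + q / (w / 2) := add_le_add h1 h2
      _ = 3 * (q / w) := by field_simp; ring

end Estimates

/-- Estimates for the test function: Dirichlet form of order `z^{1/4}`, `F̄(1) = z^{-1/4}`, and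
`z Σ F̄² ` of order `z^{-1/4}`, uniformly in `z ∈ (0,1)`. -/
theorem stmt15 :
    ∃ c C : ℝ, 0 < c ∧ 0 < C ∧ ∀ z ∈ Set.Ioo (0:ℝ) 1,
      (c * z ^ ((1:ℝ)/4) ≤ ∑' α : ℕ, (Fbar z (α + 2) - Fbar z (α + 1)) ^ 2 ∧
        (∑' α : ℕ, (Fbar z (α + 2) - Fbar z (α + 1)) ^ 2) ≤ C * z ^ ((1:ℝ)/4)) ∧
      Fbar z 1 = z ^ (-(1/4 : ℝ)) ∧
      (c * z ^ (-(1/4 : ℝ)) ≤ z * ∑' α : ℕ, (Fbar z α) ^ 2 ∧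
        z * (∑' α : ℕ, (Fbar z α) ^ 2) ≤ C * z ^ (-(1/4 : ℝ))) := by
  refine ⟨1/4, 3, by norm_num, by norm_num, fun z ⟨hz0, hz1⟩ => ?_⟩
  obtain ⟨h_diff_lower, h_diff_upper⟩ := tsum_sq_Fbar_sub_bounds hz0 hz1.le
  obtain ⟨h_sq_lower, h_sq_upper⟩ := tsum_sq_Fbar_bounds hz0 hz1.le
  have h_pos : 0 < z ^ (-(1/4 : ℝ)) := rpow_pos_of_pos hz0 _
  have h_pos' : 0 < z ^ ((1:ℝ)/4) := rpow_pos_of_pos hz0 _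
  refine ⟨⟨by linarith, by linarith⟩, by simp [Fbar], by linarith, h_sq_upper⟩
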